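/- Set n_k = k^{2k}, v_k = n_{k+1} − n_k, v'_k = v_k (1 − a_{n_{k+1}}), and u_k = (4 log₂(v_k) / (n_{k+1} a_{n_{k+1}}))^{1/2}. Assume (a_n) are positive reals with n a_n nondecreasing to ∞, a_n nonincreasing to 0, a_n log₂ n → 0, and n a_n/(log₂ n)^{7/3} → ∞. Define K_k = inf{ P(Y_k = l) / P(Z_k = v_k) : l integer in [v'_k − v_k u_k a_{n_{k+1}}, v'_k + v_k u_k a_{n_{k+1}}] }, where Y_k has Poisson distribution with mean v'_k and Z_k has Poisson distribution with mean v_k. Then K_k → 1 as k → ∞. -/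

import Mathlib

/-!
Write `v = v_k`, `A = a_{n_{k+1}}`, `m = v (1 - A)` for the mean of `Y_k` and `w = v u_k A` for the
half-width of the window. By Stirling's formula,
`log (P(Y = l) / P(Z = v)) = (l - m) - l log (l / m) + log (v / l) / 2 + o(1)` as `l, v → ∞`,
and `0 ≤ l log (l / m) - (l - m) ≤ (l - m)² / m` because `1 - 1 / x ≤ log x ≤ x - 1`.
On the window, `(l - m)² / m ≤ w² / m ≈ 4 A v log₂ v / n_{k+1} ≤ 4 A log₂ n_{k+1} → 0`, which also
forces `l / v → 1`; so the ratio tends to `1` along every choice of `l` in the window, hence so does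
its infimum. The window contains an integer because `n_{k+1} ≤ 2 v` gives
`w² ≥ n_{k+1} A log₂ v → ∞`.
-/

open MeasureTheory ProbabilityTheory Filter

/-- `llog u = log (log (u ⊔ e))`. -/
noncomputable def llog (x : ℝ) : ℝ := Real.log (Real.log (max x (Real.exp 1)))

/-- Sup-norm over `[0,1]`. -/
noncomputable def supNorm (f : ℝ → ℝ) : ℝ := ⨆ t : Set.Icc (0:ℝ) 1, |f t|

/-- Membership in the Strassen set `S₁`. -/
def InStrassen1 (f : ℝ → ℝ) : Prop :=
  ∃ f' : ℝ → ℝ, Measurable f' ∧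
    (∀ x ∈ Set.Icc (0:ℝ) 1, f x = ∫ t in (0:ℝ)..x, f' t) ∧
    (∫ t in (0:ℝ)..1, (f' t) ^ 2) ≤ 1

/-- Membership in `S₂ = {f ∈ S₁ : f 1 = 0}`. -/
def InStrassen2 (f : ℝ → ℝ) : Prop := InStrassen1 f ∧ f 1 = 0

variable {Ω : Type*} [MeasurableSpace Ω]

/-- Empirical distribution function `F_n`. -/
noncomputable def empF (U : ℕ → Ω → ℝ) (n : ℕ) (t : ℝ) (ω : Ω) : ℝ :=
  (Set.ncard {i : ℕ | i < n ∧ U i ω ≤ t} : ℝ) / n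

/-- Uniform empirical process `α_n(t) = √n (F_n(t) - t)`. -/
noncomputable def empProc (U : ℕ → Ω → ℝ) (n : ℕ) (t : ℝ) (ω : Ω) : ℝ :=
  Real.sqrt n * (empF U n t ω - t)

/-- `H_n(t) = n (F_n(t) - t)`. -/
noncomputable def empH (U : ℕ → Ω → ℝ) (n : ℕ) (t : ℝ) (ω : Ω) : ℝ :=
  (n : ℝ) * (empF U n t ω - t)

/-- The generalized inverse `F_n⁻¹(t) = inf {u : F_n(u) ≥ t}`. -/
noncomputable def empQF (U : ℕ → Ω → ℝ) (n : ℕ) (t : ℝ) (ω : Ω) : ℝ :=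
  sInf {u : ℝ | t ≤ empF U n u ω}

/-- Uniform quantile process `β_n(t) = √n (F_n⁻¹(t) - t)`. -/
noncomputable def quantProc (U : ℕ → Ω → ℝ) (n : ℕ) (t : ℝ) (ω : Ω) : ℝ :=
  Real.sqrt n * (empQF U n t ω - t)

/-- `(U_i)` are i.i.d. uniform on `[0,1]`. -/
def IsUniformIID (μ : Measure Ω) (U : ℕ → Ω → ℝ) : Prop :=
  (∀ i, Measurable (U i)) ∧
  iIndepFun U μ ∧
  (∀ i, Measure.map (U i) μ = MeasureTheory.volume.restrict (Set.Icc (0:ℝ) 1))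

/-- `n_k = k^{2k}`. -/
def nk (k : ℕ) : ℕ := k ^ (2 * k)

/-- `v_k = n_{k+1} - n_k`. -/
def vk (k : ℕ) : ℕ := nk (k + 1) - nk k

/-- The Poisson probability `P(X = l)` for a Poisson random variable with mean `m`. -/
noncomputable def poissonProb (m : ℝ) (l : ℕ) : ℝ :=
  Real.exp (-m) * m ^ l / (Nat.factorial l)

/-- `u_k = (4 log₂ v_k / (n_{k+1} a_{n_{k+1}}))^{1/2}`. -/
noncomputable def uk (a : ℕ → ℝ) (k : ℕ) : ℝ :=
  Real.sqrt (4 * llog (vk k) / ((nk (k + 1) : ℝ) * a (nk (k + 1))))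

open Real Topology Stirling

lemma abs_sub_sub_mul_log_div_le {l m : ℝ} (hl : 0 < l) (hm : 0 < m) :
    |l - m - l * log (l / m)| ≤ (l - m) ^ 2 / m := by
  have hlow := one_sub_inv_le_log_of_pos (div_pos hl hm)
  have hup := log_le_sub_one_of_pos (div_pos hl hm)
  rw [inv_div] at hlow
  have e₁ : l * (1 - m / l) = l - m := by field_simp
  have e₂ : l * (l / m - 1) - (l - m) = (l - m) ^ 2 / m := by field_simp
  rw [abs_le]
  constructor <;> nlinarith

lemma log_poissonProb {m : ℝ} (hm : 0 < m) (l : ℕ) :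
    log (poissonProb m l) = -m + l * log m - log l.factorial := by
  rw [poissonProb, log_div (by positivity) (by positivity), log_mul (exp_ne_zero _) (by positivity),
    log_exp, log_pow]

lemma poissonProb_pos {m : ℝ} (hm : 0 < m) (l : ℕ) : 0 < poissonProb m l := by
  unfold poissonProb; positivity

lemma log_poissonProb_div_poissonProb {m : ℝ} (hm : 0 < m) {l z : ℕ} (hl : l ≠ 0) (hz : z ≠ 0) :
    log (poissonProb m l / poissonProb z z) =
      (l - m - l * log (l / m)) + log (z / l) / 2
        + (log (stirlingSeq z) - log (stirlingSeq l)) := by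
  have hl0 : (0 : ℝ) < l := by positivity
  have hz0 : (0 : ℝ) < z := by positivity
  have hsl := log_stirlingSeq_formula l
  have hsz := log_stirlingSeq_formula z
  rw [log_div hl0.ne' (exp_ne_zero 1), log_exp, log_mul two_ne_zero hl0.ne'] at hsl
  rw [log_div hz0.ne' (exp_ne_zero 1), log_exp, log_mul two_ne_zero hz0.ne'] at hsz
  rw [log_div (poissonProb_pos hm l).ne' (poissonProb_pos hz0 z).ne', log_poissonProb hm,
    log_poissonProb hz0, log_div hl0.ne' hm.ne', log_div hz0.ne' hl0.ne']
  linear_combination hsl - hsz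

lemma tendsto_log_stirlingSeq_sub {ι : Type*} {L : Filter ι} {p q : ι → ℕ}
    (hp : Tendsto p L atTop) (hq : Tendsto q L atTop) :
    Tendsto (fun i => log (stirlingSeq (p i)) - log (stirlingSeq (q i))) L (𝓝 0) := by
  have h : Tendsto (fun n => log (stirlingSeq n)) atTop (𝓝 (log √π)) :=
    ((continuousAt_log (sqrt_pos.2 pi_pos).ne').tendsto).comp tendsto_stirlingSeq_sqrt_pi
  simpa using (h.comp hp).sub (h.comp hq)

lemma tendsto_atTop_of_tendsto_div {ι : Type*} {L : Filter ι} {f g : ι → ℝ}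
    (hg : Tendsto g L atTop) (h : Tendsto (fun i => f i / g i) L (𝓝 1)) : Tendsto f L atTop :=
  (h.pos_mul_atTop one_pos hg).congr'
    ((hg.eventually_gt_atTop 0).mono fun _ hi => div_mul_cancel₀ _ hi.ne')

lemma tendsto_div_of_tendsto_sq_sub_div {ι : Type*} {L : Filter ι} {x m : ι → ℝ}
    (hm : Tendsto m L atTop) (h : Tendsto (fun i => (x i - m i) ^ 2 / m i) L (𝓝 0)) :
    Tendsto (fun i => x i / m i) L (𝓝 1) := by
  have hsq : Tendsto (fun i => (x i / m i - 1) ^ 2) L (𝓝 0) := by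
    have h' := h.mul hm.inv_tendsto_atTop
    rw [zero_mul] at h'
    refine h'.congr' ((hm.eventually_gt_atTop 0).mono fun i hi => ?_)
    simp only [Pi.inv_apply]
    field_simp
  have habs := hsq.sqrt
  simp only [sqrt_sq_eq_abs, sqrt_zero] at habs
  simpa using ((tendsto_zero_iff_abs_tendsto_zero _).2 habs).add_const 1

theorem tendsto_poissonProb_div_poissonProb {ι : Type*} {L : Filter ι} {z l : ι → ℕ} {m : ι → ℝ}
    (hz : Tendsto (fun i => (z i : ℝ)) L atTop) (hm : Tendsto (fun i => m i / z i) L (𝓝 1))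
    (hl : Tendsto (fun i => ((l i : ℝ) - m i) ^ 2 / m i) L (𝓝 0)) :
    Tendsto (fun i => poissonProb (m i) (l i) / poissonProb (z i) (z i)) L (𝓝 1) := by
  have hm_top := tendsto_atTop_of_tendsto_div hz hm
  have hlm := tendsto_div_of_tendsto_sq_sub_div hm_top hl
  have hl_top := tendsto_atTop_of_tendsto_div hm_top hlm
  have hm0 := hm_top.eventually_gt_atTop 0
  have hl0 := hl_top.eventually_gt_atTop 0
  have hz0 := hz.eventually_gt_atTop 0
  have h₁ : Tendsto (fun i => (l i : ℝ) - m i - l i * log (l i / m i)) L (𝓝 0) :=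
    squeeze_zero_norm' (by filter_upwards [hm0, hl0] with i hm hl
      using abs_sub_sub_mul_log_div_le hl hm) hl
  have h₂ : Tendsto (fun i => log (z i / l i) / 2) L (𝓝 0) := by
    have hzl : Tendsto (fun i => (z i : ℝ) / l i) L (𝓝 1) := by
      have h := (hm.mul hlm).inv₀ (by norm_num)
      rw [mul_one, inv_one] at h
      refine h.congr' ?_
      filter_upwards [hm0] with i hm
      field_simp
    simpa using (((continuousAt_log one_ne_zero).tendsto).comp hzl).div_const 2
  have h₃ := tendsto_log_stirlingSeq_sub (tendsto_natCast_atTop_iff.1 hz)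
    (tendsto_natCast_atTop_iff.1 hl_top)
  have hlog : Tendsto (fun i => log (poissonProb (m i) (l i) / poissonProb (z i) (z i)))
      L (𝓝 0) := by
    have h := (h₁.add h₂).add h₃
    rw [add_zero, add_zero] at h
    refine h.congr' ?_
    filter_upwards [hm0, hl0, hz0] with i hm hl hz
    rw [log_poissonProb_div_poissonProb hm (by exact_mod_cast hl.ne') (by exact_mod_cast hz.ne')]
  have h := (continuous_exp.tendsto 0).comp hlog
  rw [exp_zero] at h
  refine h.congr' ?_
  filter_upwards [hm0, hz0] with i hm hz
  exact exp_log (div_pos (poissonProb_pos hm _) (poissonProb_pos hz _))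

lemma tendsto_csInf_of_forall_tendsto {α : Type*} {p : ℕ → α → Prop} {f : ℕ → α → ℝ} {b c : ℝ}
    (hne : ∀ᶠ k in atTop, ∃ x, p k x) (hb : ∀ᶠ k in atTop, ∀ x, p k x → b ≤ f k x)
    (h : ∀ x : ℕ → α, (∀ᶠ k in atTop, p k (x k)) → Tendsto (fun k => f k (x k)) atTop (𝓝 c)) :
    Tendsto (fun k => sInf {r | ∃ x, p k x ∧ r = f k x}) atTop (𝓝 c) := by
  set S := fun k => {r | ∃ x, p k x ∧ r = f k x}
  obtain ⟨-, x₀, -⟩ := hne.exists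
  have hsel : ∀ k, ∃ x, (∃ y, p k y) → p k x ∧ f k x < sInf (S k) + 1 / (k + 1) := by
    intro k
    by_cases hk : ∃ y, p k y
    · obtain ⟨y, hy⟩ := hk
      have hpos : (0 : ℝ) < 1 / (k + 1) := by positivity
      obtain ⟨_, ⟨x, hx, rfl⟩, hlt⟩ :=
        exists_lt_of_csInf_lt (s := S k) ⟨_, y, hy, rfl⟩ (lt_add_of_pos_right _ hpos)
      exact ⟨x, fun _ => ⟨hx, hlt⟩⟩
    · exact ⟨x₀, fun h => absurd h hk⟩
  choose x hx using hsel
  have hfx := h x (hne.mono fun k hk => (hx k hk).1)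
  have hlow := hfx.sub tendsto_one_div_add_atTop_nhds_zero_nat
  rw [sub_zero] at hlow
  refine tendsto_of_tendsto_of_tendsto_of_le_of_le' hlow hfx ?_ ?_
  · filter_upwards [hne] with k hk
    linarith [(hx k hk).2]
  · filter_upwards [hne, hb] with k hk hbk
    exact csInf_le ⟨b, by rintro _ ⟨y, hy, rfl⟩; exact hbk y hy⟩ ⟨x k, (hx k hk).1, rfl⟩

lemma exists_nat_mem_Icc {x y : ℝ} (hy : 0 ≤ y) (hxy : x + 1 ≤ y) :
    ∃ n : ℕ, (n : ℝ) ∈ Set.Icc x y :=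
  ⟨⌊y⌋₊, by linarith [Nat.lt_floor_add_one y], Nat.floor_le hy⟩

lemma one_le_log_max_exp_one (x : ℝ) : 1 ≤ log (max x (exp 1)) :=
  (le_log_iff_exp_le (by positivity)).2 (le_max_right _ _)

lemma llog_nonneg (x : ℝ) : 0 ≤ llog x :=
  log_nonneg (one_le_log_max_exp_one x)

lemma llog_mono : Monotone llog := fun x _ hxy =>
  log_le_log (by linarith [one_le_log_max_exp_one x])
    (log_le_log (by positivity) (max_le_max_right _ hxy))

lemma tendsto_llog_atTop : Tendsto llog atTop atTop :=
  tendsto_log_atTop.comp <| tendsto_log_atTop.comp <|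
    tendsto_atTop_mono (fun x => le_max_left x _) tendsto_id

lemma nk_succ_pos (k : ℕ) : 0 < nk (k + 1) := Nat.pow_pos k.succ_pos

lemma tendsto_nk_succ : Tendsto (fun k => nk (k + 1)) atTop atTop :=
  tendsto_atTop_mono (fun k => (Nat.le_succ k).trans (Nat.le_self_pow (by omega) _)) tendsto_id

lemma vk_le_nk_succ (k : ℕ) : vk k ≤ nk (k + 1) := Nat.sub_le _ _

lemma nk_succ_le_two_mul_vk {k : ℕ} (hk : 1 ≤ k) : nk (k + 1) ≤ 2 * vk k := by
  have h : 2 * nk k ≤ nk (k + 1) :=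
    calc 2 * k ^ (2 * k) ≤ (k + 1) ^ 2 * (k + 1) ^ (2 * k) :=
          Nat.mul_le_mul (by nlinarith) (Nat.pow_le_pow_left k.le_succ _)
      _ = (k + 1) ^ (2 * (k + 1)) := by ring
  unfold vk
  omega

lemma tendsto_vk : Tendsto (fun k => (vk k : ℝ)) atTop atTop := by
  refine tendsto_atTop_mono' _ ?_
    ((tendsto_natCast_atTop_atTop.comp tendsto_nk_succ).atTop_div_const two_pos)
  filter_upwards [eventually_ge_atTop 1] with k hk
  have : (nk (k + 1) : ℝ) ≤ 2 * vk k := by exact_mod_cast nk_succ_le_two_mul_vk hk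
  simp only [Function.comp_apply]
  linarith

/-- `vk' a k` is the paper's `v'_k`, and `wk a k = v_k u_k a_{n_{k+1}}` the half-width of the window
in the definition of `K_k`. -/
noncomputable def vk' (a : ℕ → ℝ) (k : ℕ) : ℝ := vk k * (1 - a (nk (k + 1)))

noncomputable def wk (a : ℕ → ℝ) (k : ℕ) : ℝ := vk k * uk a k * a (nk (k + 1))

section Window

variable {a : ℕ → ℝ}

lemma wk_sq {k : ℕ} (ha : 0 < a (nk (k + 1))) :
    wk a k ^ 2 = 4 * llog (vk k) * a (nk (k + 1)) * vk k ^ 2 / nk (k + 1) := by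
  have hn : (0 : ℝ) < nk (k + 1) := Nat.cast_pos.2 (nk_succ_pos k)
  have hu : 0 ≤ 4 * llog (vk k) / (nk (k + 1) * a (nk (k + 1))) :=
    div_nonneg (by linarith [llog_nonneg (vk k)]) (by positivity)
  rw [wk, uk, mul_pow, mul_pow, sq_sqrt hu]
  field_simp

lemma tendsto_vk'_div_vk (ha : Tendsto (fun k => a (nk (k + 1))) atTop (𝓝 0)) :
    Tendsto (fun k => vk' a k / vk k) atTop (𝓝 1) := by
  have h := (tendsto_const_nhds (x := (1 : ℝ))).sub ha
  rw [sub_zero] at h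
  refine h.congr' ?_
  filter_upwards [tendsto_vk.eventually_ne_atTop 0] with k hk
  rw [vk', mul_div_cancel_left₀ _ hk]

lemma tendsto_wk_sq_div_vk (ha_pos : ∀ n, 0 < a n)
    (halog : Tendsto (fun n : ℕ => a n * llog n) atTop (𝓝 0)) :
    Tendsto (fun k => wk a k ^ 2 / vk k) atTop (𝓝 0) := by
  have h := (halog.comp tendsto_nk_succ).const_mul 4
  rw [mul_zero] at h
  refine squeeze_zero' (Eventually.of_forall fun k => by positivity) ?_ h
  filter_upwards [tendsto_vk.eventually_gt_atTop 0] with k hk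
  have hn : (0 : ℝ) < nk (k + 1) := Nat.cast_pos.2 (nk_succ_pos k)
  have hvn : (vk k : ℝ) ≤ nk (k + 1) := by exact_mod_cast vk_le_nk_succ k
  have hll : llog (vk k) ≤ llog (nk (k + 1)) := llog_mono hvn
  have hA := ha_pos (nk (k + 1))
  rw [wk_sq hA, Function.comp_apply, div_div, div_le_iff₀ (by positivity)]
  calc 4 * llog (vk k) * a (nk (k + 1)) * vk k ^ 2
      = 4 * a (nk (k + 1)) * vk k * (llog (vk k) * vk k) := by ring
    _ ≤ 4 * a (nk (k + 1)) * vk k * (llog (nk (k + 1)) * nk (k + 1)) := by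
      gcongr
      exact llog_nonneg _
    _ = _ := by ring

lemma tendsto_wk_sq_div_vk' (ha_pos : ∀ n, 0 < a n)
    (ha : Tendsto (fun k => a (nk (k + 1))) atTop (𝓝 0))
    (halog : Tendsto (fun n : ℕ => a n * llog n) atTop (𝓝 0)) :
    Tendsto (fun k => wk a k ^ 2 / vk' a k) atTop (𝓝 0) := by
  have h := (tendsto_wk_sq_div_vk ha_pos halog).div (tendsto_vk'_div_vk ha) one_ne_zero
  rw [zero_div] at h
  refine h.congr' ?_
  filter_upwards [tendsto_vk.eventually_ne_atTop 0] with k hk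
  rw [Pi.div_apply, div_div_div_cancel_right₀ hk]

lemma tendsto_wk_atTop (ha_pos : ∀ n, 0 < a n)
    (hna : Tendsto (fun n : ℕ => (n : ℝ) * a n) atTop atTop) :
    Tendsto (wk a) atTop atTop := by
  have hsq : Tendsto (fun k => wk a k ^ 2) atTop atTop := by
    refine tendsto_atTop_mono' _ ?_ (hna.comp tendsto_nk_succ)
    filter_upwards [eventually_ge_atTop 1,
      (tendsto_llog_atTop.comp tendsto_vk).eventually_ge_atTop 1] with k hk hll
    have hn : (0 : ℝ) < nk (k + 1) := Nat.cast_pos.2 (nk_succ_pos k)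
    have hnv : (nk (k + 1) : ℝ) ≤ 2 * vk k := by exact_mod_cast nk_succ_le_two_mul_vk hk
    have hA := ha_pos (nk (k + 1))
    simp only [Function.comp_apply] at hll ⊢
    rw [wk_sq hA, le_div_iff₀ hn]
    have : (nk (k + 1) : ℝ) ^ 2 ≤ 4 * vk k ^ 2 := by nlinarith
    have hc : (0 : ℝ) ≤ 4 * a (nk (k + 1)) * vk k ^ 2 := by positivity
    nlinarith [mul_le_mul_of_nonneg_left hll hc]
  refine (tendsto_sqrt_atTop.comp hsq).congr fun k => ?_
  simp only [Function.comp_apply]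
  exact sqrt_sq (by rw [wk, uk]; have := ha_pos (nk (k + 1)); positivity)

end Window

theorem statement_general (a : ℕ → ℝ) (ha_pos : ∀ n, 0 < a n)
    (hna_top : Tendsto (fun n : ℕ => (n : ℝ) * a n) atTop atTop)
    (ha_lim : Tendsto a atTop (nhds 0))
    (halog : Tendsto (fun n : ℕ => a n * llog n) atTop (nhds 0)) :
    Tendsto (fun k : ℕ =>
      sInf {r : ℝ | ∃ l : ℕ,
        (l : ℝ) ∈ Set.Icc
          ((vk k : ℝ) * (1 - a (nk (k + 1))) - (vk k : ℝ) * uk a k * a (nk (k + 1)))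
          ((vk k : ℝ) * (1 - a (nk (k + 1))) + (vk k : ℝ) * uk a k * a (nk (k + 1))) ∧
        r = poissonProb ((vk k : ℝ) * (1 - a (nk (k + 1)))) l /
              poissonProb (vk k) (vk k)}) atTop (nhds 1) := by
  have hA : Tendsto (fun k => a (nk (k + 1))) atTop (𝓝 0) := ha_lim.comp tendsto_nk_succ
  have hv := tendsto_vk.eventually_gt_atTop 0
  have hv' : ∀ᶠ k in atTop, 0 < vk' a k := by
    filter_upwards [hv, hA.eventually_lt_const one_pos] with k hvk hAk
    exact mul_pos hvk (by linarith)
  change Tendsto (fun k => sInf {r | ∃ l : ℕ,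
    (l : ℝ) ∈ Set.Icc (vk' a k - wk a k) (vk' a k + wk a k) ∧
      r = poissonProb (vk' a k) l / poissonProb (vk k) (vk k)}) atTop (𝓝 1)
  refine tendsto_csInf_of_forall_tendsto (b := 0) ?_ ?_ fun l hl => ?_
  · filter_upwards [hv', (tendsto_wk_atTop ha_pos hna_top).eventually_ge_atTop 1] with k hvk hwk
    exact exists_nat_mem_Icc (by linarith) (by linarith)
  · filter_upwards [hv, hv'] with k hvk hvk' l _
    exact (div_pos (poissonProb_pos hvk' l) (poissonProb_pos hvk _)).le
  refine tendsto_poissonProb_div_poissonProb tendsto_vk (tendsto_vk'_div_vk hA)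
    (squeeze_zero' ?_ ?_ (tendsto_wk_sq_div_vk' ha_pos hA halog))
  · filter_upwards [hv'] with k hvk' using by positivity
  · filter_upwards [hv', hl] with k hvk' ⟨hlo, hhi⟩
    exact div_le_div_of_nonneg_right (sq_le_sq' (by linarith) (by linarith)) hvk'.le

theorem statement (a : ℕ → ℝ) (ha_pos : ∀ n, 0 < a n)
    (hna_mono : Monotone (fun n : ℕ => (n : ℝ) * a n))
    (hna_top : Tendsto (fun n : ℕ => (n : ℝ) * a n) atTop atTop)
    (ha_anti : Antitone a) (ha_lim : Tendsto a atTop (nhds 0))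
    (halog : Tendsto (fun n : ℕ => a n * llog n) atTop (nhds 0))
    (h73 : Tendsto (fun n : ℕ => (n : ℝ) * a n / llog n ^ ((7:ℝ)/3)) atTop atTop) :
    Tendsto (fun k : ℕ =>
      sInf {r : ℝ | ∃ l : ℕ,
        (l : ℝ) ∈ Set.Icc
          ((vk k : ℝ) * (1 - a (nk (k + 1))) - (vk k : ℝ) * uk a k * a (nk (k + 1)))
          ((vk k : ℝ) * (1 - a (nk (k + 1))) + (vk k : ℝ) * uk a k * a (nk (k + 1))) ∧
        r = poissonProb ((vk k : ℝ) * (1 - a (nk (k + 1)))) l /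
              poissonProb (vk k) (vk k)}) atTop (nhds 1) :=
  statement_general a ha_pos hna_top ha_lim halog
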